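/- In the coframe α₁, α₂, α₃, α₄ of the previous context, the Kundt wave metric takes the form g = I₀ α₁² + I₁ α₂² + 8(I₁ I_{2d})⁻¹ α₃² − α₃ α₄, where I₀ = x², I₁ = (xh_x − h)²/h_y², and I_{2d} = (x²h_{yu} − vh_y)²/(x(xh_x − h)³). -/

import Mathlib

noncomputable section

/-- Partial derivative on `ℝ³` with coordinates `(x,y,u)`. -/
def pd3 (f : (Fin 3 → ℝ) → ℝ) (i : Fin 3) (p : Fin 3 → ℝ) : ℝ :=
  fderiv ℝ f p (Pi.single i 1)

/-- The Kundt wave metric `g[h]` in coordinates `(x,y,u,v)`, as a symmetric matrix. -/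
def gKW (h : (Fin 3 → ℝ) → ℝ) (p : Fin 4 → ℝ) : Matrix (Fin 4) (Fin 4) ℝ :=
  !![1, 0, p 3 / p 0, 0;
     0, 1, 0, 0;
     p 3 / p 0, 0, -(8 * p 0 * h ![p 0, p 1, p 2] - (p 3) ^ 2 / (4 * (p 0) ^ 2)), -(1/2);
     0, 0, -(1/2), 0]

/-- The metric `g[h]` as a bilinear form on tangent vectors at `p`. -/
def gB (h : (Fin 3 → ℝ) → ℝ) (p v w : Fin 4 → ℝ) : ℝ :=
  ∑ i, ∑ j, v i * gKW h p i j * w j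

def hx (h : (Fin 3 → ℝ) → ℝ) (p : Fin 4 → ℝ) : ℝ := pd3 h 0 ![p 0, p 1, p 2]
def hy (h : (Fin 3 → ℝ) → ℝ) (p : Fin 4 → ℝ) : ℝ := pd3 h 1 ![p 0, p 1, p 2]
def hyu (h : (Fin 3 → ℝ) → ℝ) (p : Fin 4 → ℝ) : ℝ :=
  pd3 (fun r => pd3 h 1 r) 2 ![p 0, p 1, p 2]
def hval (h : (Fin 3 → ℝ) → ℝ) (p : Fin 4 → ℝ) : ℝ := h ![p 0, p 1, p 2]

/-- `α₁ = (1/x)dx`. -/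
def α1 (p w : Fin 4 → ℝ) : ℝ := (1 / p 0) * w 0
/-- `α₂ = (h_y/(xh_x − h))dy`. -/
def α2 (h : (Fin 3 → ℝ) → ℝ) (p w : Fin 4 → ℝ) : ℝ :=
  (hy h p / (p 0 * hx h p - hval h p)) * w 1
/-- `α₃ = ((x²h_{yu} − vh_y)/h_y)du`. -/
def α3 (h : (Fin 3 → ℝ) → ℝ) (p w : Fin 4 → ℝ) : ℝ :=
  (((p 0) ^ 2 * hyu h p - p 3 * hy h p) / hy h p) * w 2
/-- `α₄ = (h_y/(x²h_{yu} − vh_y))(dv − (2v/x)dx + (8x²h_x − v²/(4x²))du)`. -/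
def α4 (h : (Fin 3 → ℝ) → ℝ) (p w : Fin 4 → ℝ) : ℝ :=
  (hy h p / ((p 0) ^ 2 * hyu h p - p 3 * hy h p)) *
    (w 3 - (2 * p 3 / p 0) * w 0 + (8 * (p 0) ^ 2 * hx h p - (p 3) ^ 2 / (4 * (p 0) ^ 2)) * w 2)

/-- `I₀ = x²`. -/
def I0 (p : Fin 4 → ℝ) : ℝ := (p 0) ^ 2
/-- `I₁ = (xh_x − h)²/h_y²`. -/
def I1 (h : (Fin 3 → ℝ) → ℝ) (p : Fin 4 → ℝ) : ℝ :=
  (p 0 * hx h p - hval h p) ^ 2 / (hy h p) ^ 2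
/-- `I_{2d} = (x²h_{yu} − vh_y)²/(x(xh_x − h)³)`. -/
def I2d (h : (Fin 3 → ℝ) → ℝ) (p : Fin 4 → ℝ) : ℝ :=
  ((p 0) ^ 2 * hyu h p - p 3 * hy h p) ^ 2 / (p 0 * (p 0 * hx h p - hval h p) ^ 3)

set_option maxHeartbeats 4000000 in
/-- In the coframe `α₁, α₂, α₃, α₄` the Kundt wave metric takes the form
`g = I₀ α₁² + I₁ α₂² + 8(I₁ I_{2d})⁻¹ α₃² − α₃ α₄`. -/
theorem kundt_metric_in_invariant_coframe (h : (Fin 3 → ℝ) → ℝ) (hh : ContDiff ℝ (⊤ : ℕ∞) h) :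
    ∀ p : Fin 4 → ℝ, p 0 ≠ 0 → hy h p ≠ 0 → p 0 * hx h p - hval h p ≠ 0 →
      (p 0) ^ 2 * hyu h p - p 3 * hy h p ≠ 0 →
      ∀ v : Fin 4 → ℝ,
        gB h p v v =
          I0 p * (α1 p v) ^ 2 + I1 h p * (α2 h p v) ^ 2
            + 8 * (I1 h p * I2d h p)⁻¹ * (α3 h p v) ^ 2 - α3 h p v * α4 h p v := by
  intro p h0 hy0 hxh hD v
  have hv : h ![p 0, p 1, p 2] = hval h p := rfl
  simp only [gB, gKW, I0, I1, I2d, α1, α2, α3, α4, Fin.sum_univ_four, hv]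
  norm_num [Matrix.cons_val_zero, Matrix.cons_val_one, Matrix.head_cons,
    Matrix.cons_val', Matrix.cons_val_fin_one, Matrix.empty_val',
    Matrix.head_fin_const, Matrix.vecHead, Matrix.vecTail, Matrix.cons_val_two, Matrix.cons_val_three]
  generalize hx h p = a at *
  generalize hy h p = b at *
  generalize hyu h p = c at *
  generalize hval h p = d at *
  field_simp
  ring

end
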